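/- arXiv:2506.15895 — 7 statements merged into one kernel-verified Lean document; each statement's English description precedes it below -/
import Mathlib

section
/- Let U_1, …, U_m be nonempty closed convex subsets of R^n with nonempty intersection U, let x_k ∈ R^n, let S_{ik} = {z : ⟨x_k − P_{U_i}(x_k), z − P_{U_i}(x_k)⟩ ≤ 0}, Ω_k = ∩_{i=1}^m S_{ik}, and x_{k+1} = P_{Ω_k}(x_k). Then for every u ∈ U, ‖x_k − u‖² ≥ ‖x_k − x_{k+1}‖² + ‖x_{k+1} − u‖²; in particular ‖x_{k+1} − u‖ ≤ ‖x_k − u‖. -/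
open Metric Filter Topology

/-- `p` is the metric projection of `z` onto `X`. -/
def IsProj {n : ℕ} (X : Set (EuclideanSpace ℝ (Fin n))) (z p : EuclideanSpace ℝ (Fin n)) : Prop :=
  p ∈ X ∧ ∀ y ∈ X, dist z p ≤ dist z y

/-!
By the variational characterization of the projection onto a convex set, every `u ∈ ⋂ i, U i`
lies in each half-space `S_i`, hence in `Ω`. Since `Ω` is convex, the same characterization at
`xk1 = P_Ω xk` gives an obtuse angle `⟪xk - xk1, u - xk1⟫ ≤ 0`, and expanding
`‖xk - u‖² = ‖(xk - xk1) - (u - xk1)‖²` yields the inequality.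
-/

section InnerProductSpace

variable {E : Type*} [NormedAddCommGroup E] [InnerProductSpace ℝ E]

theorem inner_sub_le_zero_of_forall_dist_le {X : Set E} (hX : Convex ℝ X) {z q : E}
    (hq : q ∈ X) (h : ∀ y ∈ X, dist z q ≤ dist z y) :
    ∀ y ∈ X, inner ℝ (z - q) (y - q) ≤ (0 : ℝ) := by
  rw [← norm_eq_iInf_iff_real_inner_le_zero hX hq]
  have : Nonempty X := ⟨⟨q, hq⟩⟩
  refine le_antisymm (le_ciInf fun y => by simpa only [dist_eq_norm] using h y y.2) ?_
  exact ciInf_le ⟨0, Set.forall_mem_range.2 fun _ => norm_nonneg _⟩ (⟨q, hq⟩ : X)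

theorem convex_setOf_inner_sub_le_zero (a b : E) :
    Convex ℝ {z : E | inner ℝ a (z - b) ≤ (0 : ℝ)} := by
  simp_rw [inner_sub_right, sub_nonpos]
  exact convex_halfSpace_le (innerₛₗ ℝ a).isLinear _

theorem norm_sub_sq_add_norm_sub_sq_le_of_inner_le_zero {x y u : E}
    (h : inner ℝ (x - y) (u - y) ≤ (0 : ℝ)) :
    ‖x - y‖ ^ 2 + ‖y - u‖ ^ 2 ≤ ‖x - u‖ ^ 2 := by
  have hsplit : x - u = (x - y) - (u - y) := by abel
  rw [hsplit, norm_sub_sq_real (x - y) (u - y), norm_sub_rev y u]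
  linarith

end InnerProductSpace

theorem IsProj.inner_sub_le_zero {n : ℕ} {X : Set (EuclideanSpace ℝ (Fin n))}
    (hX : Convex ℝ X) {z q : EuclideanSpace ℝ (Fin n)} (h : IsProj X z q) :
    ∀ y ∈ X, inner ℝ (z - q) (y - q) ≤ (0 : ℝ) :=
  inner_sub_le_zero_of_forall_dist_le hX h.1 h.2

theorem stmt1_general {n m : ℕ} (U : Fin m → Set (EuclideanSpace ℝ (Fin n)))
    (hcv : ∀ i, Convex ℝ (U i))
    (xk : EuclideanSpace ℝ (Fin n)) (p : Fin m → EuclideanSpace ℝ (Fin n))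
    (hp : ∀ i, IsProj (U i) xk (p i))
    (Ω : Set (EuclideanSpace ℝ (Fin n)))
    (hΩ : Ω = ⋂ i, {z : EuclideanSpace ℝ (Fin n) | inner ℝ (xk - p i) (z - p i) ≤ (0 : ℝ)})
    (xk1 : EuclideanSpace ℝ (Fin n)) (hx1 : IsProj Ω xk xk1) :
    ∀ u ∈ ⋂ i, U i,
      ‖xk - u‖ ^ 2 ≥ ‖xk - xk1‖ ^ 2 + ‖xk1 - u‖ ^ 2 ∧ ‖xk1 - u‖ ≤ ‖xk - u‖ := by
  intro u hu
  have hΩconv : Convex ℝ Ω :=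
    hΩ ▸ convex_iInter fun i => convex_setOf_inner_sub_le_zero (xk - p i) (p i)
  have huΩ : u ∈ Ω :=
    hΩ ▸ Set.mem_iInter.2 fun i => (hp i).inner_sub_le_zero (hcv i) u (Set.mem_iInter.1 hu i)
  have hpyth : ‖xk - xk1‖ ^ 2 + ‖xk1 - u‖ ^ 2 ≤ ‖xk - u‖ ^ 2 :=
    norm_sub_sq_add_norm_sub_sq_le_of_inner_le_zero (hx1.inner_sub_le_zero hΩconv u huΩ)
  refine ⟨hpyth, ?_⟩
  exact (sq_le_sq₀ (norm_nonneg _) (norm_nonneg _)).1 (by linarith [sq_nonneg ‖xk - xk1‖])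

/-- Fejér monotonicity of the 3PM step. -/
theorem stmt1 {n m : ℕ} (U : Fin m → Set (EuclideanSpace ℝ (Fin n)))
    (hne : ∀ i, (U i).Nonempty) (hcl : ∀ i, IsClosed (U i)) (hcv : ∀ i, Convex ℝ (U i))
    (hU : (⋂ i, U i).Nonempty)
    (xk : EuclideanSpace ℝ (Fin n)) (p : Fin m → EuclideanSpace ℝ (Fin n))
    (hp : ∀ i, IsProj (U i) xk (p i))
    (Ω : Set (EuclideanSpace ℝ (Fin n)))
    (hΩ : Ω = ⋂ i, {z : EuclideanSpace ℝ (Fin n) | inner ℝ (xk - p i) (z - p i) ≤ (0 : ℝ)})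
    (xk1 : EuclideanSpace ℝ (Fin n)) (hx1 : IsProj Ω xk xk1) :
    ∀ u ∈ ⋂ i, U i,
      ‖xk - u‖ ^ 2 ≥ ‖xk - xk1‖ ^ 2 + ‖xk1 - u‖ ^ 2 ∧ ‖xk1 - u‖ ≤ ‖xk - u‖ :=
  stmt1_general U hcv xk p hp Ω hΩ xk1 hx1
end

section
/- Let (z_k) be a sequence in R^n converging to a point z̄, and suppose (z_k) is Fejér monotone with respect to a nonempty closed convex set X, that is, ‖z_{k+1} − x‖ ≤ ‖z_k − x‖ for all x ∈ X and all k. Then dist(z_k, X) ≥ (1/2)‖z_k − z̄‖ for every k. -/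
open Metric Filter Topology

/-- Distance bound from Fejér monotonicity. -/
theorem stmt2 {n : ℕ} (z : ℕ → EuclideanSpace ℝ (Fin n)) (zbar : EuclideanSpace ℝ (Fin n))
    (hconv : Tendsto z atTop (nhds zbar))
    (X : Set (EuclideanSpace ℝ (Fin n)))
    (hX : X.Nonempty) (hXc : IsClosed X) (hXconv : Convex ℝ X)
    (hfejer : ∀ x ∈ X, ∀ k : ℕ, dist (z (k + 1)) x ≤ dist (z k) x) :
    ∀ k : ℕ, Metric.infDist (z k) X ≥ (1 / 2) * ‖z k - zbar‖ := by
  intro k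
  rw [ge_iff_le, ← not_lt, infDist_lt_iff hX]
  push_neg
  intro x hx
  have hanti : Antitone (fun j => dist (z j) x) :=
    antitone_nat_of_succ_le (fun j => hfejer x hx j)
  have htend : Tendsto (fun j => dist (z j) x) atTop (nhds (dist zbar x)) :=
    hconv.dist tendsto_const_nhds
  have hle : dist zbar x ≤ dist (z k) x := by
    refine le_of_tendsto htend ?_
    filter_upwards [eventually_ge_atTop k] with j hj
    exact hanti hj
  have htri : dist (z k) zbar ≤ dist (z k) x + dist zbar x := by
    rw [dist_comm zbar x]; exact dist_triangle _ _ _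
  have : ‖z k - zbar‖ = dist (z k) zbar := (dist_eq_norm _ _).symm
  linarith
end

section
/- Let U_1, …, U_m be nonempty closed convex subsets of R^n with nonempty intersection U. Let (x_k) be the sequence generated by the Parallel Polyhedral Projection Method: x_{k+1} = P_{Ω_k}(x_k) where Ω_k = ∩_i {z : ⟨x_k − P_{U_i}(x_k), z − P_{U_i}(x_k)⟩ ≤ 0}. Then max_{1≤i≤m} dist(x_k, U_i) → 0 as k → ∞. -/
/-!
Every point `u` of `⋂ i, U i` lies in each cutting half-space, hence in `Ω k`, so the projection
step onto `Ω k` is Fejér monotone with respect to `u`: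
`‖x k - x (k+1)‖² + ‖x (k+1) - u‖² ≤ ‖x k - u‖²`. The distances `‖x k - u‖²` therefore decrease
to a limit and the step lengths tend to `0`. Since `x (k+1)` lies in the half-space cut at
`P_{U_i}(x k)`, the step length dominates `dist (x k) (U i)` for every `i`.
-/

open Metric Filter Topology

section InnerProductSpace

variable {E : Type*} [NormedAddCommGroup E] [InnerProductSpace ℝ E]

theorem inner_sub_sub_nonpos_of_forall_dist_le {K : Set E} (hK : Convex ℝ K) {z q : E}
    (hq : q ∈ K) (hmin : ∀ y ∈ K, dist z q ≤ dist z y) :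
    ∀ w ∈ K, inner ℝ (z - q) (w - q) ≤ (0 : ℝ) := by
  have : Nonempty K := ⟨⟨q, hq⟩⟩
  refine (norm_eq_iInf_iff_real_inner_le_zero hK hq).mp (le_antisymm ?_ ?_)
  · exact le_ciInf fun w => by simpa only [dist_eq_norm] using hmin w w.2
  · exact ciInf_le ⟨0, by rintro r ⟨w, rfl⟩; positivity⟩ (⟨q, hq⟩ : K)

theorem dist_sq_add_dist_sq_le_of_inner_sub_sub_nonpos {z q y : E}
    (h : inner ℝ (z - q) (y - q) ≤ (0 : ℝ)) :
    dist z q ^ 2 + dist y q ^ 2 ≤ dist z y ^ 2 := by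
  have hzy : z - y = (z - q) - (y - q) := by abel
  rw [dist_eq_norm, dist_eq_norm, dist_eq_norm, hzy, norm_sub_sq_real (z - q) (y - q)]
  linarith

theorem convex_setOf_inner_sub_nonpos (a c : E) :
    Convex ℝ {z : E | inner ℝ a (z - c) ≤ (0 : ℝ)} := by
  simp only [inner_sub_right, sub_nonpos]
  exact convex_halfSpace_le (innerₛₗ ℝ a).isLinear _

end InnerProductSpace

theorem Metric.infDist_eq_dist_of_forall_dist_le {α : Type*} [PseudoMetricSpace α] {s : Set α}
    {z q : α} (hq : q ∈ s) (hmin : ∀ y ∈ s, dist z q ≤ dist z y) :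
    infDist z s = dist z q :=
  le_antisymm (infDist_le_dist_of_mem hq) ((le_infDist ⟨q, hq⟩).mpr hmin)

theorem tendsto_zero_of_sq_add_succ_le {b d : ℕ → ℝ} (hb : ∀ k, 0 ≤ b k)
    (hbd : ∀ k, d k ^ 2 + b (k + 1) ≤ b k) : Tendsto d atTop (𝓝 0) := by
  have hanti : Antitone b :=
    antitone_nat_of_succ_le fun k => by nlinarith [hbd k, sq_nonneg (d k)]
  have hlim := tendsto_atTop_ciInf hanti ⟨0, by rintro r ⟨k, rfl⟩; exact hb k⟩
  have hdiff : Tendsto (fun k => b k - b (k + 1)) atTop (𝓝 0) := by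
    simpa using hlim.sub (hlim.comp (tendsto_add_atTop_nat 1))
  have hsqrt : Tendsto (fun k => √(b k - b (k + 1))) atTop (𝓝 0) := by
    simpa using hdiff.sqrt
  exact squeeze_zero_norm (fun k => Real.abs_le_sqrt (by linarith [hbd k])) hsqrt

theorem stmt3_general {n m : ℕ} (U : Fin m → Set (EuclideanSpace ℝ (Fin n)))
    (hcv : ∀ i, Convex ℝ (U i))
    (hU : (⋂ i, U i).Nonempty)
    (x : ℕ → EuclideanSpace ℝ (Fin n)) (p : ℕ → Fin m → EuclideanSpace ℝ (Fin n))
    (hp : ∀ k i, IsProj (U i) (x k) (p k i))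
    (hstep : ∀ k, IsProj
      (⋂ i, {z : EuclideanSpace ℝ (Fin n) | inner ℝ (x k - p k i) (z - p k i) ≤ (0 : ℝ)})
      (x k) (x (k + 1))) :
    Tendsto (fun k => ⨆ i : Fin m, Metric.infDist (x k) (U i)) atTop (nhds 0) := by
  obtain ⟨u, hu⟩ := hU
  have hcut : ∀ k i, inner ℝ (x k - p k i) (u - p k i) ≤ (0 : ℝ) := fun k i =>
    inner_sub_sub_nonpos_of_forall_dist_le (hcv i) (hp k i).1 (hp k i).2 u (Set.mem_iInter.mp hu i)
  have hfejer : ∀ k, dist (x k) (x (k + 1)) ^ 2 + dist (x (k + 1)) u ^ 2 ≤ dist (x k) u ^ 2 :=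
    fun k => by
      have hproj := inner_sub_sub_nonpos_of_forall_dist_le
        (convex_iInter fun i => convex_setOf_inner_sub_nonpos _ _) (hstep k).1 (hstep k).2 u
        (Set.mem_iInter.mpr (hcut k))
      simpa only [dist_comm u] using dist_sq_add_dist_sq_le_of_inner_sub_sub_nonpos hproj
  have hsteps : Tendsto (fun k => dist (x k) (x (k + 1))) atTop (𝓝 0) :=
    tendsto_zero_of_sq_add_succ_le (b := fun k => dist (x k) u ^ 2) (fun _ => sq_nonneg _) hfejer
  have hdist_le : ∀ k i, infDist (x k) (U i) ≤ dist (x k) (x (k + 1)) := fun k i => by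
    rw [infDist_eq_dist_of_forall_dist_le (hp k i).1 (hp k i).2]
    have h := dist_sq_add_dist_sq_le_of_inner_sub_sub_nonpos (Set.mem_iInter.mp (hstep k).1 i)
    exact (pow_le_pow_iff_left₀ dist_nonneg dist_nonneg two_ne_zero).mp
      (by linarith [sq_nonneg (dist (x (k + 1)) (p k i))])
  exact squeeze_zero (fun k => Real.iSup_nonneg fun i => infDist_nonneg)
    (fun k => Real.iSup_le (hdist_le k) dist_nonneg) hsteps

/-- Vanishing distance to the individual sets along the 3PM sequence. -/
theorem stmt3 {n m : ℕ} (hm : 0 < m) (U : Fin m → Set (EuclideanSpace ℝ (Fin n)))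
    (hne : ∀ i, (U i).Nonempty) (hcl : ∀ i, IsClosed (U i)) (hcv : ∀ i, Convex ℝ (U i))
    (hU : (⋂ i, U i).Nonempty)
    (x : ℕ → EuclideanSpace ℝ (Fin n)) (p : ℕ → Fin m → EuclideanSpace ℝ (Fin n))
    (hp : ∀ k i, IsProj (U i) (x k) (p k i))
    (hstep : ∀ k, IsProj
      (⋂ i, {z : EuclideanSpace ℝ (Fin n) | inner ℝ (x k - p k i) (z - p k i) ≤ (0 : ℝ)})
      (x k) (x (k + 1))) :
    Tendsto (fun k => ⨆ i : Fin m, Metric.infDist (x k) (U i)) atTop (nhds 0) :=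
  stmt3_general U hcv hU x p hp hstep
end

section
/- Let X ⊂ R^n be a nonempty closed convex set, x ∉ X, p = P_X(x), and q ∈ X. Then the function φ(μ) = dist(p + μ(x − p), X) / ‖p + μ(x − p) − q‖ is increasing on μ > 0. -/
open Metric Filter Topology
open scoped RealInnerProductSpace

/-- Monotonicity of the projection-distance ratio. -/
theorem stmt8 {n : ℕ} (X : Set (EuclideanSpace ℝ (Fin n)))
    (hX : X.Nonempty) (hXc : IsClosed X) (hXconv : Convex ℝ X)
    (x p : EuclideanSpace ℝ (Fin n)) (hx : x ∉ X) (hp : IsProj X x p)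
    (q : EuclideanSpace ℝ (Fin n)) (hq : q ∈ X) :
    MonotoneOn (fun μ : ℝ =>
      Metric.infDist (p + μ • (x - p)) X / ‖p + μ • (x - p) - q‖) (Set.Ioi 0) := by
  obtain ⟨hpX, hpmin⟩ := hp
  have hvne : x - p ≠ 0 := sub_ne_zero.mpr (fun h => hx (h ▸ hpX))
  have hvpos : (0:ℝ) < ‖x - p‖ := norm_pos_iff.mpr hvne
  haveI : Nonempty X := hX.to_subtype
  have hnorm : ‖x - p‖ = ⨅ w : X, ‖x - w‖ := by
    apply le_antisymm
    · exact le_ciInf fun w => by simpa [dist_eq_norm] using hpmin w w.2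
    · exact ciInf_le ⟨0, fun r ⟨w, hw⟩ => hw ▸ norm_nonneg _⟩ (⟨p, hpX⟩ : X)
  have hvar : ∀ w ∈ X, ⟪x - p, w - p⟫ ≤ 0 :=
    (norm_eq_iInf_iff_real_inner_le_zero hXconv hpX).1 hnorm
  have key : ∀ μ : ℝ, 0 < μ → Metric.infDist (p + μ • (x - p)) X = μ * ‖x - p‖ := by
    intro μ hμ
    have hproj : ‖(p + μ • (x - p)) - p‖ = ⨅ w : X, ‖(p + μ • (x - p)) - w‖ := by
      rw [norm_eq_iInf_iff_real_inner_le_zero hXconv hpX]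
      intro w hw
      have h1 : ⟪(p + μ • (x - p)) - p, w - p⟫ = μ * ⟪x - p, w - p⟫ := by
        rw [add_sub_cancel_left, real_inner_smul_left]
      rw [h1]
      exact mul_nonpos_of_nonneg_of_nonpos hμ.le (hvar w hw)
    rw [Metric.infDist_eq_iInf]
    simp_rw [dist_eq_norm]
    rw [← hproj, add_sub_cancel_left, norm_smul, Real.norm_eq_abs, abs_of_pos hμ]
  have hden : ∀ μ : ℝ, 0 < μ → 0 < ‖p + μ • (x - p) - q‖ := by
    intro μ hμ
    rw [norm_pos_iff, sub_ne_zero]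
    intro h0
    have h1 : Metric.infDist (p + μ • (x - p)) X = 0 := by
      rw [h0]; exact Metric.infDist_zero_of_mem hq
    rw [key μ hμ] at h1
    nlinarith
  have hinner : 0 ≤ ⟪p - q, x - p⟫ := by
    have h := hvar q hq
    have h2 : ⟪p - q, x - p⟫ = -⟪x - p, q - p⟫ := by
      rw [real_inner_comm, ← neg_sub q p, inner_neg_right]
    rw [h2]; linarith
  intro a ha b hb hab
  simp only
  rw [key a ha, key b hb, div_le_div_iff₀ (hden a ha) (hden b hb)]
  have hrw : ∀ t : ℝ, p + t • (x - p) - q = (p - q) + t • (x - p) := fun t => by abel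
  rw [hrw a, hrw b]
  set v := x - p
  set w := p - q
  have ea : ‖w + a • v‖ ^ 2 = ‖w‖ ^ 2 + 2 * a * ⟪w, v⟫ + a ^ 2 * ‖v‖ ^ 2 := by
    rw [norm_add_sq_real, real_inner_smul_right, norm_smul, Real.norm_eq_abs, mul_pow, sq_abs]
    ring
  have eb : ‖w + b • v‖ ^ 2 = ‖w‖ ^ 2 + 2 * b * ⟪w, v⟫ + b ^ 2 * ‖v‖ ^ 2 := by
    rw [norm_add_sq_real, real_inner_smul_right, norm_smul, Real.norm_eq_abs, mul_pow, sq_abs]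
    ring
  have ha' : (0:ℝ) < a := ha
  have hb' : (0:ℝ) < b := hb
  have hsq : (a * ‖w + b • v‖) ^ 2 ≤ (b * ‖w + a • v‖) ^ 2 := by
    have h1 : 0 ≤ a * b * (b - a) * ⟪w, v⟫ :=
      mul_nonneg (mul_nonneg (mul_nonneg ha'.le hb'.le) (sub_nonneg.2 hab)) hinner
    have h2 : 0 ≤ (b - a) * (a + b) * ‖w‖ ^ 2 :=
      mul_nonneg (mul_nonneg (sub_nonneg.2 hab) (by linarith)) (sq_nonneg _)
    nlinarith [ea, eb, h1, h2]
  have hN : a * ‖w + b • v‖ ≤ b * ‖w + a • v‖ := by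
    have h1 : 0 ≤ a * ‖w + b • v‖ := mul_nonneg ha'.le (norm_nonneg _)
    have h2 : 0 ≤ b * ‖w + a • v‖ := mul_nonneg hb'.le (norm_nonneg _)
    exact (pow_le_pow_iff_left₀ h1 h2 two_ne_zero).1 hsq
  calc a * ‖v‖ * ‖w + b • v‖ = ‖v‖ * (a * ‖w + b • v‖) := by ring
    _ ≤ ‖v‖ * (b * ‖w + a • v‖) := by
        exact mul_le_mul_of_nonneg_left hN (norm_nonneg _)
    _ = b * ‖v‖ * ‖w + a • v‖ := by ring
end

section
/- Let g : R^n → R be C¹, M = {z : g(z) = 0} a level set, and z̄ ∈ M with ∇g(z̄) ≠ 0. Suppose sequences (q_k) ⊂ M and (z_k) converge to z̄ with z_k ≠ q_k and z_k in the tangent hyperplane T_M(q_k) = {z : ⟨∇g(q_k), z − q_k⟩ = 0}. Then dist(z_k, M)/‖z_k − q_k‖ → 0. -/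
/-!
Near a point where its derivative is onto, a C¹ map is metrically regular: the distance from `x`
to the level set `f ⁻¹' {f a}` is `O(‖f x - f a‖)`. Since `g (q k) = 0` and `z k - q k` is tangent
at `q k`, `g (z k) = g (z k) - g (q k) - Dg (q k) (z k - q k)`, which is `o(‖z k - q k‖)` by strict
differentiability of `g` at `zbar` together with continuity of `Dg`.
-/

open Metric Filter Topology Asymptotics

section NontriviallyNormedField

variable {𝕜 : Type*} [NontriviallyNormedField 𝕜]
  {E : Type*} [NormedAddCommGroup E] [NormedSpace 𝕜 E]
  {F : Type*} [NormedAddCommGroup F] [NormedSpace 𝕜 F]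

theorem Asymptotics.isLittleO_clm_apply_of_tendsto_zero {α : Type*} {l : Filter α}
    {A : α → E →L[𝕜] F} {w : α → E} (hA : Tendsto A l (𝓝 0)) :
    (fun i => A i (w i)) =o[l] w := by
  refine isLittleO_iff.mpr fun c hc => ?_
  filter_upwards [(tendsto_zero_iff_norm_tendsto_zero.mp hA).eventually (eventually_le_nhds hc)]
    with i hi
  exact (A i).le_of_opNorm_le hi (w i)

/-- With `f` approximating `f'` up to `c = ‖f'⁻¹‖⁻¹ / 2` near `a`, the quantitative local
surjectivity of `f` puts a point of the level set within `‖f x - f a‖ / c` of `x`. -/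
theorem HasStrictFDerivAt.isBigO_infDist_preimage_of_surj [CompleteSpace E] [CompleteSpace F]
    {f : E → F} {f' : E →L[𝕜] F} {a : E} (hf : HasStrictFDerivAt f f' a)
    (hsurj : f'.range = ⊤) :
    (fun x => infDist x (f ⁻¹' {f a})) =O[𝓝 a] fun x => f x - f a := by
  set f'symm := f'.nonlinearRightInverseOfSurjective hsurj
  have hN : 0 < f'symm.nnnorm := f'.nonlinearRightInverseOfSurjective_nnnorm_pos hsurj
  set c : NNReal := f'symm.nnnorm⁻¹ / 2 with hc
  have hc_pos : 0 < c := by simp [hc, hN]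
  obtain ⟨s, hs, hfs⟩ := hf.approximates_deriv_on_nhds (Or.inr hc_pos)
  obtain ⟨r, hr, hrs⟩ := Metric.mem_nhds_iff.mp hs
  have hfa : Tendsto (fun x => ‖f x - f a‖ / c) (𝓝 a) (𝓝 0) := by
    simpa using (hf.continuousAt.tendsto.sub_const (f a)).norm.div_const (c : ℝ)
  refine isBigO_iff.mpr ⟨(c : ℝ)⁻¹, ?_⟩
  filter_upwards [ball_mem_nhds a (half_pos hr), hfa.eventually (gt_mem_nhds (half_pos hr))]
    with x hx hρ
  set ρ := ‖f x - f a‖ / c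
  have hball : closedBall x ρ ⊆ s := by
    refine (closedBall_subset_ball' ?_).trans hrs
    linarith [mem_ball.mp hx]
  have hradius : ((f'symm.nnnorm : ℝ)⁻¹ - c) * ρ = ‖f x - f a‖ := by
    have hc' : (c : ℝ) = (f'symm.nnnorm : ℝ)⁻¹ / 2 := by simp [hc]
    have hN' : (0 : ℝ) < f'symm.nnnorm := hN
    simp only [ρ, hc']
    field_simp
    ring
  obtain ⟨y, hy, hfy⟩ := hfs.surjOn_closedBall_of_nonlinearRightInverse f'symm
    (by positivity) hball (by rw [hradius, mem_closedBall, dist_eq_norm'])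
  calc ‖infDist x (f ⁻¹' {f a})‖ = infDist x (f ⁻¹' {f a}) := Real.norm_of_nonneg infDist_nonneg
    _ ≤ dist x y := infDist_le_dist_of_mem hfy
    _ ≤ ρ := by rw [dist_comm]; exact hy
    _ = (c : ℝ)⁻¹ * ‖f x - f a‖ := div_eq_inv_mul _ _

end NontriviallyNormedField

section RCLike

variable {𝕜 : Type*} [RCLike 𝕜]
  {E : Type*} [NormedAddCommGroup E] [NormedSpace 𝕜 E]
  {F : Type*} [NormedAddCommGroup F] [NormedSpace 𝕜 F]

theorem ContDiffAt.isLittleO_sub_sub_fderiv {f : E → F} {a : E} (hf : ContDiffAt 𝕜 1 f a)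
    {α : Type*} {l : Filter α} {u v : α → E} (hu : Tendsto u l (𝓝 a)) (hv : Tendsto v l (𝓝 a)) :
    (fun i => f (v i) - f (u i) - fderiv 𝕜 f (u i) (v i - u i)) =o[l] fun i => v i - u i := by
  have hstrict : (fun i => f (v i) - f (u i) - fderiv 𝕜 f a (v i - u i)) =o[l]
      fun i => v i - u i :=
    (hf.hasStrictFDerivAt one_ne_zero).isLittleO.comp_tendsto (hv.prodMk_nhds hu)
  have hderiv : (fun i => (fderiv 𝕜 f (u i) - fderiv 𝕜 f a) (v i - u i)) =o[l]
      fun i => v i - u i :=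
    isLittleO_clm_apply_of_tendsto_zero <| by
      simpa using ((hf.continuousAt_fderiv one_ne_zero).tendsto.comp hu).sub_const (fderiv 𝕜 f a)
  refine (hstrict.sub hderiv).congr_left fun i => ?_
  simp only [sub_apply]
  abel

end RCLike

theorem stmt11_general {n : ℕ} (g : EuclideanSpace ℝ (Fin n) → ℝ) (hg : ContDiff ℝ 1 g)
    (M : Set (EuclideanSpace ℝ (Fin n))) (hM : M = {z | g z = 0})
    (zbar : EuclideanSpace ℝ (Fin n)) (hzbar : zbar ∈ M) (hgrad : gradient g zbar ≠ 0)
    (q z : ℕ → EuclideanSpace ℝ (Fin n))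
    (hqM : ∀ k, q k ∈ M)
    (hq : Tendsto q atTop (nhds zbar)) (hz : Tendsto z atTop (nhds zbar))
    (htangent : ∀ k, inner ℝ (gradient g (q k)) (z k - q k) = (0 : ℝ)) :
    Tendsto (fun k => Metric.infDist (z k) M / ‖z k - q k‖) atTop (nhds 0) := by
  subst hM
  have hgzbar : g zbar = 0 := hzbar
  have hsurj : (fderiv ℝ g zbar).range = ⊤ := by
    refine Module.Dual.range_eq_top_of_ne_zero fun h => hgrad ?_
    rw [← (InnerProductSpace.toDual ℝ _).map_eq_zero_iff, toDual_gradient]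
    exact ContinuousLinearMap.coe_injective h
  have hdist := ((hg.contDiffAt.hasStrictFDerivAt one_ne_zero).isBigO_infDist_preimage_of_surj
    hsurj).comp_tendsto hz
  simp only [hgzbar, sub_zero] at hdist
  have hsmall : (fun k => g (z k)) =o[atTop] fun k => z k - q k := by
    refine (hg.contDiffAt.isLittleO_sub_sub_fderiv hq hz).congr_left fun k => ?_
    rw [← toDual_gradient, InnerProductSpace.toDual_apply_apply, htangent k, hqM k]
    simp
  exact (hdist.trans_isLittleO hsmall).norm_right.tendsto_div_nhds_zero

/-- Tangency limit to the manifold. -/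
theorem stmt11 {n : ℕ} (g : EuclideanSpace ℝ (Fin n) → ℝ) (hg : ContDiff ℝ 1 g)
    (M : Set (EuclideanSpace ℝ (Fin n))) (hM : M = {z | g z = 0})
    (zbar : EuclideanSpace ℝ (Fin n)) (hzbar : zbar ∈ M) (hgrad : gradient g zbar ≠ 0)
    (q z : ℕ → EuclideanSpace ℝ (Fin n))
    (hqM : ∀ k, q k ∈ M)
    (hq : Tendsto q atTop (nhds zbar)) (hz : Tendsto z atTop (nhds zbar))
    (hne : ∀ k, z k ≠ q k)
    (htangent : ∀ k, inner ℝ (gradient g (q k)) (z k - q k) = (0 : ℝ)) :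
    Tendsto (fun k => Metric.infDist (z k) M / ‖z k - q k‖) atTop (nhds 0) :=
  stmt11_general g hg M hM zbar hzbar hgrad q z hqM hq hz htangent
end

section
/- Let U ⊂ R^n be closed and convex, let B be an open ball, and let g ∈ C¹(B) be such that U ∩ B = {x ∈ B : g(x) ≤ 0}, ∂U ∩ B = {x ∈ B : g(x) = 0}, and ∇g ≠ 0 on B. Let x̄ ∈ ∂U ∩ B, let x_k ∉ U with x_k → x̄, and let p_k = P_U(x_k). Then the cosine of the angle between x_k − p_k and x_{k+1} − p_{k+1} tends to 1; equivalently, (x_k − p_k)/‖x_k − p_k‖ converges to ∇g(x̄)/‖∇g(x̄)‖. -/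
open Metric Filter Topology

/-!
Every limit direction `w` of `(x_k - p_k) / ‖x_k - p_k‖` is a unit vector in the normal cone of `U`
at `x̄`: passing to the limit in the variational inequality `⟪x_k - p_k, y - p_k⟫ ≤ 0` of the
projection gives `⟪w, y - x̄⟫ ≤ 0` for all `y ∈ U`. Since `U` is the sublevel set `{g ≤ 0}` near `x̄`
and `g x̄ = 0`, every direction `d` with `⟪∇g x̄, d⟫ < 0` enters `U`, so `⟪w, d⟫ ≤ 0` on that open
half-space, which pins `w` down to `∇g x̄ / ‖∇g x̄‖`. By compactness of the unit sphere the
directions converge, and the cosine of consecutive directions tends to `‖∇g x̄ / ‖∇g x̄‖‖² = 1`.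
-/

lemma tendsto_of_forall_dist_le {X ι : Type*} [PseudoMetricSpace X] {l : Filter ι} {x p : ι → X}
    {a : X} (hx : Tendsto x l (𝓝 a)) (hp : ∀ i, dist (x i) (p i) ≤ dist (x i) a) :
    Tendsto p l (𝓝 a) := by
  rw [tendsto_iff_dist_tendsto_zero] at hx ⊢
  refine squeeze_zero (fun _ => dist_nonneg) (fun i => ?_) (by simpa using hx.const_mul 2)
  calc dist (p i) a ≤ dist (x i) (p i) + dist (x i) a := dist_triangle_left _ _ _
    _ ≤ 2 * dist (x i) a := by linarith [hp i]

open scoped RealInnerProductSpace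

section InnerProductSpace

variable {F : Type*} [NormedAddCommGroup F] [InnerProductSpace ℝ F]

lemma real_inner_sub_nonpos_of_forall_dist_le {K : Set F} (hK : Convex ℝ K) {u v : F}
    (hv : v ∈ K) (hmin : ∀ w ∈ K, dist u v ≤ dist u w) {w : F} (hw : w ∈ K) :
    ⟪u - v, w - v⟫ ≤ 0 := by
  have : Nonempty K := ⟨⟨v, hv⟩⟩
  refine (norm_eq_iInf_iff_real_inner_le_zero hK hv).1 (le_antisymm ?_ ?_) w hw
  · exact le_ciInf fun w => by simpa only [dist_eq_norm] using hmin w w.2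
  · exact ciInf_le (f := fun w : K => ‖u - w‖) ⟨0, Set.forall_mem_range.2 fun _ => norm_nonneg _⟩
      ⟨v, hv⟩

lemma real_inner_sub_nonpos_of_tendsto_proj {ι : Type*} {l : Filter ι} [l.NeBot] {K : Set F}
    (hK : Convex ℝ K) {x p : ι → F} {a w : F}
    (hp : ∀ i, p i ∈ K ∧ ∀ y ∈ K, dist (x i) (p i) ≤ dist (x i) y) (hpa : Tendsto p l (𝓝 a))
    (hw : Tendsto (fun i => ‖x i - p i‖⁻¹ • (x i - p i)) l (𝓝 w)) {y : F} (hy : y ∈ K) :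
    ⟪w, y - a⟫ ≤ 0 := by
  refine le_of_tendsto' (hw.inner (tendsto_const_nhds.sub hpa)) fun i => ?_
  rw [real_inner_smul_left]
  exact mul_nonpos_of_nonneg_of_nonpos (by positivity)
    (real_inner_sub_nonpos_of_forall_dist_le hK (hp i).1 (hp i).2 hy)

lemma HasLineDerivAt.eventually_lt_of_neg {g : F → ℝ} {g' : ℝ} {a d : F}
    (hg : HasLineDerivAt ℝ g g' a d) (hneg : g' < 0) :
    ∀ᶠ t in 𝓝[>] (0 : ℝ), g (a + t • d) < g a := by
  filter_upwards [hg.tendsto_slope_zero_right.eventually (eventually_lt_nhds hneg),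
    self_mem_nhdsWithin] with t hslope ht
  exact sub_neg.1 (neg_of_mul_neg_right hslope (inv_nonneg.2 (le_of_lt ht)))

lemma exists_pos_add_smul_mem_of_hasLineDerivAt_neg {U B : Set F} (hB : IsOpen B) {g : F → ℝ}
    (hUB : U ∩ B = {y ∈ B | g y ≤ 0}) {a d : F} (ha : a ∈ B) (hga : g a = 0) {g' : ℝ}
    (hg : HasLineDerivAt ℝ g g' a d) (hneg : g' < 0) :
    ∃ t : ℝ, 0 < t ∧ a + t • d ∈ U := by
  have hline : Tendsto (fun t : ℝ => a + t • d) (𝓝 0) (𝓝 a) :=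
    (continuous_const.add (continuous_id.smul continuous_const)).tendsto' 0 a (by simp)
  obtain ⟨t, ⟨hlt, htB⟩, ht⟩ := ((hg.eventually_lt_of_neg hneg).and
    ((hline.eventually (hB.mem_nhds ha)).filter_mono nhdsWithin_le_nhds)
    |>.and self_mem_nhdsWithin).exists
  have : a + t • d ∈ U ∩ B := hUB ▸ ⟨htB, hga ▸ hlt.le⟩
  exact ⟨t, ht, this.1⟩

lemma eq_inv_norm_smul_of_forall_inner_neg {G v : F} (hG : G ≠ 0) (hv : ‖v‖ = 1)
    (h : ∀ d, ⟪G, d⟫ < 0 → ⟪v, d⟫ ≤ 0) : v = ‖G‖⁻¹ • G := by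
  set ν : F := ‖G‖⁻¹ • G
  have hν : ‖ν‖ = 1 := by simpa using norm_smul_inv_norm (𝕜 := ℝ) hG
  have hGν : G = ‖G‖ • ν := by simp [ν, smul_smul, norm_ne_zero_iff.2 hG]
  refine (inner_eq_one_iff_of_norm_eq_one hv hν).1
    (le_antisymm ((real_inner_le_norm v ν).trans_eq (by rw [hv, hν, one_mul])) ?_)
  -- if `⟪v, ν⟫ < 1`, the direction `v - ν` lies in the open half-space but `⟪v, v - ν⟫ > 0`
  by_contra! hlt
  have hd : ⟪G, v - ν⟫ < 0 := by
    rw [hGν, real_inner_smul_left, inner_sub_right, real_inner_self_eq_norm_sq, hν,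
      real_inner_comm]
    exact mul_neg_of_pos_of_neg (norm_pos_iff.2 hG) (by linarith)
  have := h _ hd
  rw [inner_sub_right, real_inner_self_eq_norm_sq, hv] at this
  linarith

lemma eq_inv_norm_smul_gradient_of_forall_inner_sub_nonpos [CompleteSpace F] {U B : Set F}
    (hB : IsOpen B) {g : F → ℝ} (hUB : U ∩ B = {y ∈ B | g y ≤ 0}) {a : F} (ha : a ∈ B)
    (hga : g a = 0) (hg : DifferentiableAt ℝ g a) (hG : gradient g a ≠ 0) {w : F} (hw : ‖w‖ = 1)
    (hnormal : ∀ y ∈ U, ⟪w, y - a⟫ ≤ 0) :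
    w = ‖gradient g a‖⁻¹ • gradient g a := by
  refine eq_inv_norm_smul_of_forall_inner_neg hG hw fun d hd => ?_
  have hline : HasLineDerivAt ℝ g ⟪gradient g a, d⟫ a d := by
    simpa using hg.hasGradientAt.hasFDerivAt.hasLineDerivAt d
  obtain ⟨t, ht, hmem⟩ := exists_pos_add_smul_mem_of_hasLineDerivAt_neg hB hUB ha hga hline hd
  have := hnormal _ hmem
  rw [add_sub_cancel_left, real_inner_smul_right] at this
  exact nonpos_of_mul_nonpos_right this ht

lemma tendsto_inner_div_norm_mul_norm_succ {u : ℕ → F} {ν : F}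
    (hu : Tendsto (fun k => ‖u k‖⁻¹ • u k) atTop (𝓝 ν)) (hν : ‖ν‖ = 1) :
    Tendsto (fun k => ⟪u k, u (k + 1)⟫ / (‖u k‖ * ‖u (k + 1)‖)) atTop (𝓝 1) := by
  have h := hu.inner (𝕜 := ℝ) (hu.comp (tendsto_add_atTop_nat 1))
  rw [real_inner_self_eq_norm_sq, hν, one_pow] at h
  refine h.congr fun k => ?_
  simp only [Function.comp_apply, real_inner_smul_left, real_inner_smul_right]
  rw [div_eq_mul_inv, mul_inv]
  ring

end InnerProductSpace

theorem stmt12_general {n : ℕ} (U : Set (EuclideanSpace ℝ (Fin n)))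
    (hUconv : Convex ℝ U)
    (c : EuclideanSpace ℝ (Fin n)) (r : ℝ)
    (g : EuclideanSpace ℝ (Fin n) → ℝ)
    (hg : ContDiffOn ℝ 1 g (Metric.ball c r))
    (hUB : U ∩ Metric.ball c r = {y ∈ Metric.ball c r | g y ≤ 0})
    (hbd : frontier U ∩ Metric.ball c r = {y ∈ Metric.ball c r | g y = 0})
    (hgrad : ∀ y ∈ Metric.ball c r, gradient g y ≠ 0)
    (xbar : EuclideanSpace ℝ (Fin n))
    (hxbar : xbar ∈ frontier U ∩ Metric.ball c r)
    (x : ℕ → EuclideanSpace ℝ (Fin n)) (hx : ∀ k, x k ∉ U)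
    (hlim : Tendsto x atTop (nhds xbar))
    (p : ℕ → EuclideanSpace ℝ (Fin n)) (hp : ∀ k, IsProj U (x k) (p k)) :
    Tendsto (fun k => ‖x k - p k‖⁻¹ • (x k - p k)) atTop
      (nhds (‖gradient g xbar‖⁻¹ • gradient g xbar)) ∧
    Tendsto (fun k =>
        (inner ℝ (x k - p k) (x (k + 1) - p (k + 1)) : ℝ) /
          (‖x k - p k‖ * ‖x (k + 1) - p (k + 1)‖)) atTop (nhds 1) := by
  have hB : xbar ∈ ball c r := hxbar.2
  have hgx : g xbar = 0 := (hbd ▸ hxbar : xbar ∈ {y ∈ ball c r | g y = 0}).2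
  have hxU : xbar ∈ U := (hUB ▸ ⟨hB, hgx.le⟩ : xbar ∈ U ∩ ball c r).1
  have hpx : Tendsto p atTop (𝓝 xbar) := tendsto_of_forall_dist_le hlim fun k => (hp k).2 xbar hxU
  have hdiff : DifferentiableAt ℝ g xbar :=
    (hg.differentiableOn one_ne_zero).differentiableAt (isOpen_ball.mem_nhds hB)
  have hdir : Tendsto (fun k => ‖x k - p k‖⁻¹ • (x k - p k)) atTop
      (𝓝 (‖gradient g xbar‖⁻¹ • gradient g xbar)) := by
    refine (isCompact_sphere 0 1).tendsto_nhds_of_unique_mapClusterPt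
      (Eventually.of_forall fun k => ?_) fun w hw hcluster => ?_
    · have hne : x k - p k ≠ 0 := sub_ne_zero.2 fun h => hx k (h ▸ (hp k).1)
      simpa using norm_smul_inv_norm (𝕜 := ℝ) hne
    · obtain ⟨L, hL, hLw⟩ := mapClusterPt_iff_ultrafilter.1 hcluster
      exact eq_inv_norm_smul_gradient_of_forall_inner_sub_nonpos isOpen_ball hUB hB hgx hdiff
        (hgrad xbar hB) (by simpa using hw) fun y hy =>
        real_inner_sub_nonpos_of_tendsto_proj hUconv hp (hpx.mono_left hL) hLw hy
  exact ⟨hdir, tendsto_inner_div_norm_mul_norm_succ hdir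
    (by simpa using norm_smul_inv_norm (𝕜 := ℝ) (hgrad xbar hB))⟩

/-- Alignment of projection directions near a smooth boundary. -/
theorem stmt12 {n : ℕ} (U : Set (EuclideanSpace ℝ (Fin n)))
    (hUc : IsClosed U) (hUconv : Convex ℝ U)
    (c : EuclideanSpace ℝ (Fin n)) (r : ℝ) (hr : 0 < r)
    (g : EuclideanSpace ℝ (Fin n) → ℝ)
    (hg : ContDiffOn ℝ 1 g (Metric.ball c r))
    (hUB : U ∩ Metric.ball c r = {y ∈ Metric.ball c r | g y ≤ 0})
    (hbd : frontier U ∩ Metric.ball c r = {y ∈ Metric.ball c r | g y = 0})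
    (hgrad : ∀ y ∈ Metric.ball c r, gradient g y ≠ 0)
    (xbar : EuclideanSpace ℝ (Fin n))
    (hxbar : xbar ∈ frontier U ∩ Metric.ball c r)
    (x : ℕ → EuclideanSpace ℝ (Fin n)) (hx : ∀ k, x k ∉ U)
    (hlim : Tendsto x atTop (nhds xbar))
    (p : ℕ → EuclideanSpace ℝ (Fin n)) (hp : ∀ k, IsProj U (x k) (p k)) :
    Tendsto (fun k => ‖x k - p k‖⁻¹ • (x k - p k)) atTop
      (nhds (‖gradient g xbar‖⁻¹ • gradient g xbar)) ∧
    Tendsto (fun k =>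
        (inner ℝ (x k - p k) (x (k + 1) - p (k + 1)) : ℝ) /
          (‖x k - p k‖ * ‖x (k + 1) - p (k + 1)‖)) atTop (nhds 1) :=
  stmt12_general U hUconv c r g hg hUB hbd hgrad xbar hxbar x hx hlim p hp
end

section
/- Let U_1, …, U_m be nonempty closed convex sets in R^n with nonempty intersection U, and let (ε_k) ⊂ [0,1) with sup_k ε_k < 1. Let (x_k) be generated by A3PM: x_{k+1} is an ε_k-approximate projection of x_k onto Ω̂_k = ∩_i Ŝ_{ik}, where Ŝ_{ik} = {z : ⟨x_k − p̂_{ik}, z − p̂_{ik}⟩ ≤ 0} and each p̂_{ik} is an ε_k-approximate projection of x_k onto U_i. Then for every u ∈ U, ‖u − x_k‖² ≥ (1 − ε_k)⁴ max_i dist(x_k, U_i)² + ‖u − x_{k+1}‖², and consequently max_{1≤i≤m} dist(x_k, U_i) → 0. -/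
/-!
Every point of the half-space `Ŝ_i` is at least as far from `x` as `p̂_i`, so
`(1 - ε) dist(x, U_i) ≤ ‖x - p̂_i‖ ≤ dist(x, Ω̂)`; likewise `(1 - ε) dist(x, Ω̂) ≤ ‖x - x'‖`,
whence `‖x - x'‖ ≥ (1 - ε)² max_i dist(x, U_i)`. Since `U ⊆ Ω̂`, the obtuse-angle condition of `x'`
at `u ∈ U` gives `‖u - x‖² ≥ ‖x - x'‖² + ‖u - x'‖²`. Thus `‖u - x_k‖²` decreases by at least
`(1 - sup ε)⁴ max_i dist(x_k, U_i)²` per step; being bounded below, its decrements tend to zero.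
-/

open Metric Filter Topology

/-- `xhat` is an `ε`-approximate projection of `x` onto `X`. -/
def ApproxProj {n : ℕ} (X : Set (EuclideanSpace ℝ (Fin n)))
    (x xhat : EuclideanSpace ℝ (Fin n)) (ε : ℝ) : Prop :=
  Metric.infDist xhat X ≤ ε * Metric.infDist x X ∧
    ∀ z ∈ X, inner ℝ (z - xhat) (x - xhat) ≤ (0 : ℝ)

section InnerProduct

variable {E : Type*} [NormedAddCommGroup E] [InnerProductSpace ℝ E]

lemma norm_sub_sq_add_le_of_inner_nonpos {x y u : E} (h : inner ℝ (u - y) (x - y) ≤ (0 : ℝ)) :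
    ‖x - y‖ ^ 2 + ‖u - y‖ ^ 2 ≤ ‖u - x‖ ^ 2 := by
  have hsplit : u - x = (u - y) - (x - y) := by abel
  rw [hsplit, norm_sub_sq_real (u - y) (x - y)]
  nlinarith

lemma dist_le_infDist_of_forall_inner_nonpos {x p : E} {s : Set E} (hs : s.Nonempty)
    (h : ∀ z ∈ s, inner ℝ (x - p) (z - p) ≤ (0 : ℝ)) : dist x p ≤ infDist x s := by
  refine (le_infDist hs).2 fun z hz => ?_
  have hsq := norm_sub_sq_add_le_of_inner_nonpos ((real_inner_comm _ _).trans_le (h z hz))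
  rw [dist_eq_norm, dist_comm, dist_eq_norm]
  exact (pow_le_pow_iff_left₀ (norm_nonneg _) (norm_nonneg _) two_ne_zero).1
    (by nlinarith [sq_nonneg ‖z - p‖])

end InnerProduct

lemma tendsto_zero_of_mul_sq_le_sub_succ {a b : ℕ → ℝ} {c : ℝ} (hc : 0 < c)
    (ha : ∀ k, 0 ≤ a k) (hb : ∀ k, 0 ≤ b k) (h : ∀ k, c * b k ^ 2 ≤ a k - a (k + 1)) :
    Tendsto b atTop (𝓝 0) := by
  have hanti : Antitone a := antitone_nat_of_succ_le fun k => by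
    nlinarith [h k, sq_nonneg (b k)]
  have hlim := tendsto_atTop_ciInf hanti ⟨0, by rintro _ ⟨k, rfl⟩; exact ha k⟩
  have hdiff : Tendsto (fun k => a k - a (k + 1)) atTop (𝓝 0) := by
    simpa using hlim.sub (hlim.comp (tendsto_add_atTop_nat 1))
  have hsq : Tendsto (fun k => b k ^ 2) atTop (𝓝 0) := by
    refine squeeze_zero (fun k => sq_nonneg _) (fun k => ?_) (by simpa using hdiff.div_const c)
    rw [le_div_iff₀ hc, mul_comm]; exact h k
  simpa [Real.sqrt_sq (hb _)] using hsq.sqrt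

namespace ApproxProj

variable {n : ℕ} {x xhat : EuclideanSpace ℝ (Fin n)} {ε : ℝ}

lemma one_sub_mul_infDist_le {X : Set (EuclideanSpace ℝ (Fin n))} (h : ApproxProj X x xhat ε) :
    (1 - ε) * infDist x X ≤ dist x xhat := by
  linarith [h.1, infDist_le_infDist_add_dist (x := x) (y := xhat) (s := X)]

lemma subset_halfspace {X : Set (EuclideanSpace ℝ (Fin n))} (h : ApproxProj X x xhat ε) :
    X ⊆ {z | inner ℝ (x - xhat) (z - xhat) ≤ (0 : ℝ)} := fun z hz =>
  (real_inner_comm _ _).trans_le (h.2 z hz)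

variable {ι : Type*} {X : ι → Set (EuclideanSpace ℝ (Fin n))} {p : ι → EuclideanSpace ℝ (Fin n)}

lemma one_sub_mul_iSup_infDist_le (hε : ε ≤ 1) (hp : ∀ i, ApproxProj (X i) x (p i) ε)
    (hX : (⋂ i, X i).Nonempty) :
    (1 - ε) * ⨆ i, infDist x (X i) ≤
      infDist x (⋂ i, {z | inner ℝ (x - p i) (z - p i) ≤ (0 : ℝ)}) := by
  have hΩ : (⋂ i, {z | inner ℝ (x - p i) (z - p i) ≤ (0 : ℝ)}).Nonempty :=
    hX.mono (Set.iInter_mono fun i => (hp i).subset_halfspace)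
  rw [Real.mul_iSup_of_nonneg (sub_nonneg.2 hε)]
  refine Real.iSup_le (fun i => ?_) infDist_nonneg
  exact (hp i).one_sub_mul_infDist_le.trans
    (dist_le_infDist_of_forall_inner_nonpos hΩ fun z hz => Set.mem_iInter.1 hz i)

lemma one_sub_pow_four_mul_sq_iSup_infDist_add_le {x' u : EuclideanSpace ℝ (Fin n)} (hε : ε ≤ 1)
    (hp : ∀ i, ApproxProj (X i) x (p i) ε)
    (hstep : ApproxProj (⋂ i, {z | inner ℝ (x - p i) (z - p i) ≤ (0 : ℝ)}) x x' ε)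
    (hu : u ∈ ⋂ i, X i) :
    (1 - ε) ^ 4 * (⨆ i, infDist x (X i)) ^ 2 + ‖u - x'‖ ^ 2 ≤ ‖u - x‖ ^ 2 := by
  set M := ⨆ i, infDist x (X i)
  have hM : 0 ≤ M := Real.iSup_nonneg fun i => infDist_nonneg
  have hε' : 0 ≤ 1 - ε := sub_nonneg.2 hε
  have hmove : (1 - ε) ^ 2 * M ≤ ‖x - x'‖ := calc
    (1 - ε) ^ 2 * M = (1 - ε) * ((1 - ε) * M) := by ring
    _ ≤ (1 - ε) * infDist x (⋂ i, {z | inner ℝ (x - p i) (z - p i) ≤ (0 : ℝ)}) :=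
      mul_le_mul_of_nonneg_left (one_sub_mul_iSup_infDist_le hε hp ⟨u, hu⟩) hε'
    _ ≤ ‖x - x'‖ := by rw [← dist_eq_norm]; exact hstep.one_sub_mul_infDist_le
  have hfejer := norm_sub_sq_add_le_of_inner_nonpos
    (hstep.2 u (Set.iInter_mono (fun i => (hp i).subset_halfspace) hu))
  calc (1 - ε) ^ 4 * M ^ 2 + ‖u - x'‖ ^ 2 = ((1 - ε) ^ 2 * M) ^ 2 + ‖u - x'‖ ^ 2 := by ring
    _ ≤ ‖x - x'‖ ^ 2 + ‖u - x'‖ ^ 2 := by gcongr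
    _ ≤ ‖u - x‖ ^ 2 := hfejer

end ApproxProj

theorem stmt17_general {n m : ℕ} (U : Fin m → Set (EuclideanSpace ℝ (Fin n)))
    (hU : (⋂ i, U i).Nonempty)
    (ε : ℕ → ℝ) (hε : ∀ k, ε k ∈ Set.Ico (0 : ℝ) 1) (hsup : (⨆ k, ε k) < 1)
    (x : ℕ → EuclideanSpace ℝ (Fin n)) (p : ℕ → Fin m → EuclideanSpace ℝ (Fin n))
    (hp : ∀ k i, ApproxProj (U i) (x k) (p k i) (ε k))
    (hstep : ∀ k, ApproxProj
      (⋂ i, {z : EuclideanSpace ℝ (Fin n) | inner ℝ (x k - p k i) (z - p k i) ≤ (0 : ℝ)})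
      (x k) (x (k + 1)) (ε k)) :
    (∀ u ∈ ⋂ i, U i, ∀ k,
        ‖u - x k‖ ^ 2 ≥
          (1 - ε k) ^ 4 * (⨆ i : Fin m, Metric.infDist (x k) (U i)) ^ 2 +
            ‖u - x (k + 1)‖ ^ 2) ∧
      Tendsto (fun k => ⨆ i : Fin m, Metric.infDist (x k) (U i)) atTop (nhds 0) := by
  have hfejer : ∀ u ∈ ⋂ i, U i, ∀ k, (1 - ε k) ^ 4 * (⨆ i, infDist (x k) (U i)) ^ 2 +
      ‖u - x (k + 1)‖ ^ 2 ≤ ‖u - x k‖ ^ 2 := fun u hu k =>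
    ApproxProj.one_sub_pow_four_mul_sq_iSup_infDist_add_le (hε k).2.le (hp k) (hstep k) hu
  refine ⟨hfejer, ?_⟩
  obtain ⟨u, hu⟩ := hU
  have hεbdd : BddAbove (Set.range ε) := ⟨1, by rintro _ ⟨k, rfl⟩; exact (hε k).2.le⟩
  refine tendsto_zero_of_mul_sq_le_sub_succ (a := fun k => ‖u - x k‖ ^ 2)
    (pow_pos (sub_pos.2 hsup) 4) (fun k => sq_nonneg _)
    (fun k => Real.iSup_nonneg fun i => infDist_nonneg) fun k => ?_
  have hrate : (1 - ⨆ k, ε k) ^ 4 ≤ (1 - ε k) ^ 4 := by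
    gcongr
    exact le_ciSup hεbdd k
  nlinarith [hfejer u hu k, sq_nonneg (⨆ i, infDist (x k) (U i))]

/-- Fejér-type estimate and vanishing setwise distance for A3PM. -/
theorem stmt17 {n m : ℕ} (hm : 0 < m) (U : Fin m → Set (EuclideanSpace ℝ (Fin n)))
    (hne : ∀ i, (U i).Nonempty) (hcl : ∀ i, IsClosed (U i)) (hcv : ∀ i, Convex ℝ (U i))
    (hU : (⋂ i, U i).Nonempty)
    (ε : ℕ → ℝ) (hε : ∀ k, ε k ∈ Set.Ico (0 : ℝ) 1) (hsup : (⨆ k, ε k) < 1)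
    (x : ℕ → EuclideanSpace ℝ (Fin n)) (p : ℕ → Fin m → EuclideanSpace ℝ (Fin n))
    (hp : ∀ k i, ApproxProj (U i) (x k) (p k i) (ε k))
    (hstep : ∀ k, ApproxProj
      (⋂ i, {z : EuclideanSpace ℝ (Fin n) | inner ℝ (x k - p k i) (z - p k i) ≤ (0 : ℝ)})
      (x k) (x (k + 1)) (ε k)) :
    (∀ u ∈ ⋂ i, U i, ∀ k,
        ‖u - x k‖ ^ 2 ≥
          (1 - ε k) ^ 4 * (⨆ i : Fin m, Metric.infDist (x k) (U i)) ^ 2 +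
            ‖u - x (k + 1)‖ ^ 2) ∧
      Tendsto (fun k => ⨆ i : Fin m, Metric.infDist (x k) (U i)) atTop (nhds 0) :=
  stmt17_general U hU ε hε hsup x p hp hstep
end
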